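/- arXiv:1311.4072 — 7 statements merged into one kernel-verified Lean document; each statement's English description precedes it below -/
import Mathlib

section
/- Let h, h' be nonzero quaternions such that the real part of h'·u·h vanishes for every purely imaginary quaternion u. Then h' = λ·h⁻¹ for some nonzero real number λ. -/
/-!
`Re` is a trace, `Re (a * b) = Re (b * a)`, so `Re (h' * u * h) = Re (h * h' * u)`. A quaternion whose
product with every purely imaginary `u` has zero real part is real, since pairing with `i`, `j`, `k`
reads off its imaginary components. Hence `h * h' = λ` is real, nonzero, and `h' = λ • h⁻¹`.
-/

open scoped Quaternion

namespace Quaternion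

variable {R : Type*} [CommRing R]

theorem re_mul_comm (a b : ℍ[R]) : (a * b).re = (b * a).re := by
  simp only [re_mul]
  ring

theorem eq_re_of_forall_re_mul_eq_zero {q : ℍ[R]}
    (H : ∀ u : ℍ[R], u.re = 0 → (q * u).re = 0) : q = q.re := by
  have pairing (v : Fin 4 → R) (hv : v 0 = 0) :
      q.re * v 0 - q.imI * v 1 - q.imJ * v 2 - q.imK * v 3 = 0 := by
    have hu := H ((equivTuple R).symm v) hv
    rwa [re_mul] at hu
  have hI : q.imI = 0 := by simpa using pairing ![0, 1, 0, 0] rfl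
  have hJ : q.imJ = 0 := by simpa using pairing ![0, 0, 1, 0] rfl
  have hK : q.imK = 0 := by simpa using pairing ![0, 0, 0, 1] rfl
  ext <;> simp [hI, hJ, hK]

end Quaternion

/-- If `h, h'` are nonzero quaternions such that `Re (h' * u * h) = 0`
for every purely imaginary quaternion `u`, then `h' = λ • h⁻¹` for some nonzero real `λ`. -/
theorem quaternion_re_mul_vanishing_imp_inverse_proportional
    (h h' : ℍ[ℝ]) (hh : h ≠ 0) (hh' : h' ≠ 0)
    (H : ∀ u : ℍ[ℝ], u.re = 0 → (h' * u * h).re = 0) :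
    ∃ l : ℝ, l ≠ 0 ∧ h' = l • h⁻¹ := by
  have hreal : h * h' = ((h * h').re : ℍ[ℝ]) :=
    Quaternion.eq_re_of_forall_re_mul_eq_zero fun u hu => by
      rw [mul_assoc, Quaternion.re_mul_comm]
      exact H u hu
  refine ⟨(h * h').re, fun hzero => mul_ne_zero hh hh' ?_, ?_⟩
  · rw [hreal, hzero, Quaternion.coe_zero]
  · calc h' = h⁻¹ * (h * h') := by rw [← mul_assoc, inv_mul_cancel₀ hh, one_mul]
      _ = (h * h').re • h⁻¹ := by rw [hreal, Quaternion.mul_coe_eq_smul, Quaternion.re_coe]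
end

section
/- Let V = ℍⁿ with standard quaternionic structure, W = ℍ^{n−1} ⊕ Im ℍ ⊂ V, and let φ = (A, a) ∈ GL_n(ℍ)·Sp₁ act by v ↦ A v a⁻¹. If φ(W) ⊆ W then with respect to the decomposition V = ℍ^{n−1} ⊕ ℍ, A has block form [[A₁, A₂],[0, λa]] for some A₁ ∈ GL_{n−1}(ℍ), A₂ ∈ Hom_ℍ(ℍ, ℍ^{n−1}) and λ ∈ ℝ \ {0}. -/
open scoped Quaternion

/-!
Let `f` be the last coordinate of `A`. Testing the hypothesis on `v * (q * a)` with `v` in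
`ℍⁿ × {0}` gives `Re (f v * q) = 0` for every quaternion `q`, and taking `q = star (f v)` forces
`f v = 0`. Hence `f v = b * vₙ` with `b = f eₙ`, and testing on `eₙ * q` with `q` imaginary
shows that `a⁻¹ * b` is orthogonal to `Im ℍ`, i.e. real. It is nonzero because `A` is onto.
-/

namespace Quaternion

variable {R : Type*}

theorem re_mul_comm_s7 [CommRing R] (x y : ℍ[R]) : (x * y).re = (y * x).re := by
  simp only [re_mul]; ring

section LinearOrderedCommRing

variable [CommRing R] [LinearOrder R] [IsStrictOrderedRing R] {x : ℍ[R]}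

theorem eq_zero_of_forall_re_mul_eq_zero (h : ∀ q : ℍ[R], (x * q).re = 0) : x = 0 := by
  simpa [self_mul_star] using h (star x)

theorem eq_coe_re_of_forall_re_mul_eq_zero (h : ∀ q : ℍ[R], q.re = 0 → (x * q).re = 0) :
    x = x.re := by
  have him : normSq x.im = 0 := by
    have := h (-x.im) (by simp)
    rw [normSq_def']
    simp only [re_mul, re_neg, re_im, imI_neg, imI_im, imJ_neg, imJ_im, imK_neg, imK_im] at this ⊢
    linear_combination this
  rw [← sub_im_self x, normSq_eq_zero.mp him, sub_zero]

end LinearOrderedCommRing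

end Quaternion

theorem AddMonoidHom.map_eq_map_single_mul_of_map_eq_zero {R ι : Type*} [Ring R] [DecidableEq ι]
    (f : (ι → R) →+ R) (hf : ∀ (v : ι → R) (c : R), f (fun m => v m * c) = f v * c) (i : ι)
    (h0 : ∀ v : ι → R, v i = 0 → f v = 0) (v : ι → R) : f v = f (Pi.single i 1) * v i := by
  have hsplit : v = (v - Pi.single i (v i)) + fun m => (Pi.single i 1 : ι → R) m * v i := by
    ext m
    by_cases hm : m = i <;> simp [Pi.single_apply, hm]
  rw [hsplit, map_add, h0 _ (by simp), hf]
  simp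

namespace Quaternion

variable {R ι : Type*} [Field R] [LinearOrder R] [IsStrictOrderedRing R]
  (f : (ι → ℍ[R]) →+ ℍ[R]) (hf : ∀ (v : ι → ℍ[R]) (c : ℍ[R]), f (fun m => v m * c) = f v * c)
  {i : ι} {a : ℍ[R]}
  (hW : ∀ v : ι → ℍ[R], (v i).re = 0 → (f v * a⁻¹).re = 0)
include hf hW

theorem map_eq_zero_of_apply_eq_zero (ha : a ≠ 0) (v : ι → ℍ[R]) (hv : v i = 0) : f v = 0 := by
  refine eq_zero_of_forall_re_mul_eq_zero fun q => ?_
  have := hW (fun m => v m * (q * a)) (by simp [hv])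
  rwa [hf, ← mul_assoc, mul_inv_cancel_right₀ ha] at this

theorem inv_mul_map_single_eq_coe_re [DecidableEq ι] :
    a⁻¹ * f (Pi.single i 1) = (a⁻¹ * f (Pi.single i 1)).re := by
  refine eq_coe_re_of_forall_re_mul_eq_zero fun q hq => ?_
  have := hW (fun m => (Pi.single i 1 : ι → ℍ[R]) m * q) (by simpa using hq)
  rwa [hf, re_mul_comm_s7, ← mul_assoc] at this

theorem map_eq_smul_mul_apply [DecidableEq ι] (ha : a ≠ 0) (v : ι → ℍ[R]) :
    f v = (a⁻¹ * f (Pi.single i 1)).re • (a * v i) := by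
  rw [f.map_eq_map_single_mul_of_map_eq_zero hf i (map_eq_zero_of_apply_eq_zero f hf hW ha) v]
  calc f (Pi.single i 1) * v i = a * (a⁻¹ * f (Pi.single i 1)) * v i := by
        rw [mul_inv_cancel_left₀ ha]
    _ = (a⁻¹ * f (Pi.single i 1)).re • (a * v i) := by
        rw [inv_mul_map_single_eq_coe_re f hf hW, re_coe, mul_coe_eq_smul, smul_mul_assoc]

end Quaternion

theorem stabilizer_of_CR_hyperplane_block_form_general
    (n : ℕ)
    (A : (Fin (n + 1) → ℍ[ℝ]) ≃ₗ[ℝ] (Fin (n + 1) → ℍ[ℝ]))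
    (hA : ∀ (v : Fin (n + 1) → ℍ[ℝ]) (c : ℍ[ℝ]),
      A (fun m => v m * c) = fun m => A v m * c)
    (a : ℍ[ℝ]) (ha : ‖a‖ = 1)
    (hW : ∀ v : Fin (n + 1) → ℍ[ℝ], (v (Fin.last n)).re = 0 →
      ((A v (Fin.last n)) * a⁻¹).re = 0) :
    (∀ v : Fin (n + 1) → ℍ[ℝ], v (Fin.last n) = 0 → A v (Fin.last n) = 0) ∧
      ∃ l : ℝ, l ≠ 0 ∧
        ∀ v : Fin (n + 1) → ℍ[ℝ], A v (Fin.last n) = l • (a * v (Fin.last n)) := by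
  have ha0 : a ≠ 0 := by
    rintro rfl
    simp at ha
  let f := (Pi.evalAddMonoidHom _ (Fin.last n)).comp A.toLinearMap.toAddMonoidHom
  have hf : ∀ v c, f (fun m => v m * c) = f v * c := fun v c => congrFun (hA v c) _
  have hrow := Quaternion.map_eq_smul_mul_apply f hf hW ha0
  refine ⟨Quaternion.map_eq_zero_of_apply_eq_zero f hf hW ha0, _, ?_, hrow⟩
  intro hl
  have := hrow (A.symm (Pi.single (Fin.last n) 1))
  rw [hl, zero_smul] at this
  simp [f] at this

/-- Let `V = ℍ^{n+1}` (right ℍ-module), `W = ℍⁿ ⊕ Im ℍ` the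
hyperplane where the last coordinate is imaginary, and `φ = (A, a)` acting by
`v ↦ A v a⁻¹` with `A` right-ℍ-linear invertible and `a` a unit quaternion.  If
`φ(W) ⊆ W` then `A` has block form `[[A₁, A₂], [0, λ a]]`: the last row of `A`
vanishes on the first `n` coordinates and the last diagonal block is `λ a` for some
nonzero real `λ` (so `A` preserves `U = ℍⁿ × {0}`, inducing `A₁` there, with `A₂`
the remaining upper block). -/
theorem stabilizer_of_CR_hyperplane_block_form
    (n : ℕ) (hn : 1 ≤ n)
    (A : (Fin (n + 1) → ℍ[ℝ]) ≃ₗ[ℝ] (Fin (n + 1) → ℍ[ℝ]))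
    (hA : ∀ (v : Fin (n + 1) → ℍ[ℝ]) (c : ℍ[ℝ]),
      A (fun m => v m * c) = fun m => A v m * c)
    (a : ℍ[ℝ]) (ha : ‖a‖ = 1)
    (hW : ∀ v : Fin (n + 1) → ℍ[ℝ], (v (Fin.last n)).re = 0 →
      ((A v (Fin.last n)) * a⁻¹).re = 0) :
    (∀ v : Fin (n + 1) → ℍ[ℝ], v (Fin.last n) = 0 → A v (Fin.last n) = 0) ∧
      ∃ l : ℝ, l ≠ 0 ∧
        ∀ v : Fin (n + 1) → ℍ[ℝ], A v (Fin.last n) = l • (a * v (Fin.last n)) :=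
  stabilizer_of_CR_hyperplane_block_form_general n A hA a ha hW
end

section
/- With V = ℍⁿ, W = ℍ^{n−1} ⊕ Im ℍ and n ≥ 2, any element φ = (A,a) ∈ GL_n(ℍ)·Sp₁ preserving W and whose restriction to W is the identity must be the identity of V; equivalently, the subgroup N♯ of W-preserving elements acting trivially on W is trivial. -/
/-!
Let `e` be the last basis vector and `φ v = A v a⁻¹`. For imaginary `q` the vector `e q` lies in
`W`, and right `ℍ`-linearity gives `φ (e q) = (A e) q a⁻¹`; so `(A e)_m q a⁻¹ = (e q)_m` for all
imaginary `q`. Off the last coordinate this forces `(A e)_m = 0`. On it, `b = (A e)_last` satisfies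
`b q a⁻¹ = q`; the case `q = i` shows `a ≠ 0`, and comparing coordinates in `b q = q a` for
`q = i, j, k` gives `b = a`. Hence `φ e = e`, and since `φ` is additive and commutes with real
scalars, it fixes `W + ℝ e = V`.
-/

open scoped Quaternion

namespace Quaternion

variable {R : Type*}

theorem eq_of_forall_re_eq_zero_mul_eq_mul [CommRing R] {a b : ℍ[R]}
    (h : ∀ q : ℍ[R], q.re = 0 → b * q = q * a) : b = a := by
  have hcoord (q : ℍ[R]) (hq : q.re = 0) :
      (b * q).re = (q * a).re ∧ (b * q).imI = (q * a).imI := by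
    rw [h q hq]
    exact ⟨rfl, rfl⟩
  simp only [re_mul, imI_mul] at hcoord
  obtain ⟨hI, hre⟩ := hcoord ⟨0, 1, 0, 0⟩ rfl
  obtain ⟨hJ, -⟩ := hcoord ⟨0, 0, 1, 0⟩ rfl
  obtain ⟨hK, -⟩ := hcoord ⟨0, 0, 0, 1⟩ rfl
  ext
  · linear_combination hre
  · linear_combination -hI
  · linear_combination -hJ
  · linear_combination -hK

theorem mul_eq_one_of_forall_re_eq_zero_mul_mul_eq [Field R] [LinearOrder R]
    [IsStrictOrderedRing R] {b c : ℍ[R]} (h : ∀ q : ℍ[R], q.re = 0 → b * q * c = q) :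
    b * c = 1 := by
  have hc : c ≠ 0 := by
    rintro rfl
    have := congrArg QuaternionAlgebra.imI (h ⟨0, 1, 0, 0⟩ rfl)
    simp at this
  have hb : b = c⁻¹ :=
    eq_of_forall_re_eq_zero_mul_eq_mul fun q hq => (eq_mul_inv_iff_mul_eq₀ hc).2 (h q hq)
  rw [hb, inv_mul_cancel₀ hc]

end Quaternion

section RightLinear

variable {R ι : Type*} [Field R] [LinearOrder R] [IsStrictOrderedRing R] [DecidableEq ι]
  {i₀ : ι} {A : (ι → ℍ[R]) →+ (ι → ℍ[R])} {c : ℍ[R]}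

theorem apply_single_one_mul_eq_single_one
    (hA : ∀ (v : ι → ℍ[R]) (q : ℍ[R]), A (fun m => v m * q) = fun m => A v m * q)
    (hfix : ∀ v : ι → ℍ[R], (v i₀).re = 0 → (fun m => A v m * c) = v) :
    (fun m => A (Pi.single i₀ 1) m * c) = Pi.single i₀ 1 := by
  set e : ι → ℍ[R] := Pi.single i₀ 1
  have he (q : ℍ[R]) (hq : q.re = 0) (m : ι) : A e m * q * c = e m * q := by
    have hsingle : (fun m => e m * q) = Pi.single i₀ q := by
      funext m
      simpa using (Pi.single_mul_left_apply i₀ m (1 : ℍ[R]) fun _ => q).symm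
    have := congrFun (hfix (Pi.single i₀ q) (by simpa using hq)) m
    simpa only [← hsingle, hA] using this
  have hlast : A e i₀ * c = 1 :=
    Quaternion.mul_eq_one_of_forall_re_eq_zero_mul_mul_eq fun q hq => by
      simpa [e] using he q hq i₀
  funext m
  rcases eq_or_ne m i₀ with rfl | hm
  · simpa [e] using hlast
  · have hc : c ≠ 0 := right_ne_zero_of_mul_eq_one hlast
    obtain ⟨i, hi, hire⟩ : ∃ i : ℍ[R], i ≠ 0 ∧ i.re = 0 :=
      ⟨⟨0, 1, 0, 0⟩, fun h => by simpa using congrArg QuaternionAlgebra.imI h, rfl⟩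
    have h := he i hire m
    simp only [e, Pi.single_eq_of_ne hm, zero_mul, mul_eq_zero, hc, hi, or_false] at h
    simp [e, Pi.single_eq_of_ne hm, h]

theorem apply_mul_eq_self_of_forall_re_eq_zero
    (hA : ∀ (v : ι → ℍ[R]) (q : ℍ[R]), A (fun m => v m * q) = fun m => A v m * q)
    (hfix : ∀ v : ι → ℍ[R], (v i₀).re = 0 → (fun m => A v m * c) = v) (v : ι → ℍ[R]) :
    (fun m => A v m * c) = v := by
  set e : ι → ℍ[R] := Pi.single i₀ 1
  set r : ℍ[R] := ((v i₀).re : ℍ[R])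
  set w : ι → ℍ[R] := v - fun m => e m * r
  have hw : (w i₀).re = 0 := by simp [w, e, r]
  have hv : v = w + fun m => e m * r := (sub_add_cancel _ _).symm
  funext m
  calc A v m * c = (A w m + A e m * r) * c := by rw [hv, map_add, hA]; rfl
    _ = A w m * c + A e m * c * r := by
      rw [add_mul, mul_assoc, mul_assoc, Quaternion.coe_commutes]
    _ = w m + e m * r := by
      rw [congrFun (hfix w hw) m, congrFun (apply_single_one_mul_eq_single_one hA hfix) m]
    _ = v m := sub_add_cancel _ _

end RightLinear

theorem trivial_stabilizer_acting_trivially_general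
    (n : ℕ)
    (A : (Fin (n + 1) → ℍ[ℝ]) ≃ₗ[ℝ] (Fin (n + 1) → ℍ[ℝ]))
    (hA : ∀ (v : Fin (n + 1) → ℍ[ℝ]) (c : ℍ[ℝ]),
      A (fun m => v m * c) = fun m => A v m * c)
    (a : ℍ[ℝ])
    (hId : ∀ v : Fin (n + 1) → ℍ[ℝ], (v (Fin.last n)).re = 0 →
      (fun m => A v m * a⁻¹) = v) :
    ∀ v : Fin (n + 1) → ℍ[ℝ], (fun m => A v m * a⁻¹) = v :=
  apply_mul_eq_self_of_forall_re_eq_zero (A := A.toAddMonoidHom) hA hId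

/-- With `V = ℍ^{n+1}` (`n ≥ 1`, i.e. paper's `n ≥ 2`) and
`W = ℍⁿ ⊕ Im ℍ`, any `φ = (A, a)` (acting by `v ↦ A v a⁻¹`, `A` right-ℍ-linear,
`a` unit) which restricts to the identity on `W` is the identity of `V`;
i.e. the subgroup `N♯` is trivial. -/
theorem trivial_stabilizer_acting_trivially
    (n : ℕ) (hn : 1 ≤ n)
    (A : (Fin (n + 1) → ℍ[ℝ]) ≃ₗ[ℝ] (Fin (n + 1) → ℍ[ℝ]))
    (hA : ∀ (v : Fin (n + 1) → ℍ[ℝ]) (c : ℍ[ℝ]),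
      A (fun m => v m * c) = fun m => A v m * c)
    (a : ℍ[ℝ]) (ha : ‖a‖ = 1)
    (hId : ∀ v : Fin (n + 1) → ℍ[ℝ], (v (Fin.last n)).re = 0 →
      (fun m => A v m * a⁻¹) = v) :
    ∀ v : Fin (n + 1) → ℍ[ℝ], (fun m => A v m * a⁻¹) = v :=
  trivial_stabilizer_acting_trivially_general n A hA a hId
end

section
/- Let φ = (A,a) ∈ GL_n(ℍ)·Sp₁ act on V = ℍⁿ with U = ℍ^{n−1} × {0} ⊂ V and W = ℍ^{n−1} ⊕ Im ℍ. If the component of φ(u) along the last real coordinate W^⊥ vanishes for all u ∈ W, then φ(U) ⊆ U. -/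
open scoped Quaternion

/-- With `V = ℍ^{n+1} = U ⊕ U^⊥ ⊕ W^⊥` (`U = ℍⁿ × {0}`,
`W = ℍⁿ ⊕ Im ℍ`) and `φ = (A, a)` acting by `v ↦ A v a⁻¹`: if the `W^⊥`-component
(the real part of the last coordinate) of `φ(w)` vanishes for all `w ∈ W`, then
`φ(U) ⊆ U`, i.e. the last coordinate of `A v` vanishes whenever the last coordinate
of `v` does. -/
theorem maps_U_into_U_of_W_perp_component_vanishing
    (n : ℕ) (hn : 1 ≤ n)
    (A : (Fin (n + 1) → ℍ[ℝ]) ≃ₗ[ℝ] (Fin (n + 1) → ℍ[ℝ]))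
    (hA : ∀ (v : Fin (n + 1) → ℍ[ℝ]) (c : ℍ[ℝ]),
      A (fun m => v m * c) = fun m => A v m * c)
    (a : ℍ[ℝ]) (ha : ‖a‖ = 1)
    (hW : ∀ v : Fin (n + 1) → ℍ[ℝ], (v (Fin.last n)).re = 0 →
      ((A v (Fin.last n)) * a⁻¹).re = 0) :
    ∀ v : Fin (n + 1) → ℍ[ℝ], v (Fin.last n) = 0 → A v (Fin.last n) = 0 := by
  intro v hv
  have ha0 : a ≠ 0 := by
    intro h; rw [h] at ha; simp at ha
  set q := A v (Fin.last n) with hq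
  have key : ∀ c : ℍ[ℝ], (q * c * a⁻¹).re = 0 := by
    intro c
    have h1 : ((fun m => v m * c) (Fin.last n)).re = 0 := by simp [hv]
    have h2 := hW (fun m => v m * c) h1
    rw [hA] at h2
    simpa using h2
  have h3 := key (star q * a)
  have h4 : q * (star q * a) * a⁻¹ = q * star q := by
    rw [mul_assoc, mul_assoc, mul_inv_cancel₀ ha0, mul_one]
  rw [h4, Quaternion.self_mul_star] at h3
  simp only [Quaternion.re_coe] at h3
  exact Quaternion.normSq_eq_zero.mp h3
end

section
/- The formulas [A₁, A₂] = A₁∘A₂, [λ, A₂] = −λA₂, [a, A₂] = −A₂∘L_a (for A₁ ∈ gl_{n−1}(ℍ), A₂ ∈ Hom_ℍ(ℍ, ℍ^{n−1}), λ ∈ ℝ, a ∈ sp₁, L_a left multiplication by a on ℍ), together with the standard brackets of gl_{n−1}(ℍ) and sp₁ and all other brackets zero, define a Lie algebra structure on (gl_{n−1}(ℍ) ⋉ Hom_ℍ(ℍ, ℍ^{n−1})) ⋊ (ℝ ⊕ sp₁) (i.e., the Jacobi identity holds). -/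
open scoped Quaternion

/-- Carrier of `(gl_{m}(ℍ) ⋉ Hom_ℍ(ℍ, ℍ^m)) ⋊ (ℝ ⊕ sp₁)`: right-ℍ-linear maps of `ℍ^m`
are identified with `m × m` quaternionic matrices (acting by left multiplication) and
`Hom_ℍ(ℍ, ℍ^m) ≅ ℍ^m` via `f ↦ f(1)`; `sp₁ = Im ℍ` sits inside the quaternion factor. -/
abbrev glHomRSp (m : ℕ) :=
  Matrix (Fin m) (Fin m) ℍ[ℝ] × (Fin m → ℍ[ℝ]) × ℝ × ℍ[ℝ]

/-- The bracket: standard brackets on `gl_m(ℍ)` and `sp₁`, `[A₁, A₂] = A₁ ∘ A₂`,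
`[λ, A₂] = −λ A₂`, `[a, A₂] = −A₂ ∘ L_a` (which under `A₂ ↦ A₂(1)` is
`u ↦ −(u · a)` componentwise), and all other brackets zero. -/
noncomputable def glBr {m : ℕ} (x y : glHomRSp m) : glHomRSp m :=
  (x.1 * y.1 - y.1 * x.1,
    x.1.mulVec y.2.1 - y.1.mulVec x.2.1 - x.2.2.1 • y.2.1 + y.2.2.1 • x.2.1
      - (fun i => y.2.1 i * x.2.2.2) + (fun i => x.2.1 i * y.2.2.2),
    0,
    x.2.2.2 * y.2.2.2 - y.2.2.2 * x.2.2.2)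

/-! The bracket is the semidirect product of the direct-sum Lie algebra
`gl_m(ℍ) ⊕ ℝ ⊕ ℍ` (commutator brackets, `ℝ` abelian) with the abelian ideal `ℍ^m`, on which
`(A, t, a)` acts by `v ↦ A v - t v - v a`. Right multiplication is an anti-homomorphism, so the
minus sign makes this action a representation of `ℍ` with its commutator bracket; it commutes
with the left `gl_m(ℍ)`-action and the scalars. Jacobi for such a semidirect product is then
exactly the representation property. -/

theorem Quaternion.re_lie {R : Type*} [CommRing R] (a b : ℍ[R]) : ⁅a, b⁆.re = 0 := by
  rw [Ring.lie_def, Quaternion.re_sub, Quaternion.re_mul, Quaternion.re_mul]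
  ring

namespace glHomRSp

variable {m : ℕ}

noncomputable def act (x : glHomRSp m) (v : Fin m → ℍ[ℝ]) : Fin m → ℍ[ℝ] :=
  x.1.mulVec v - x.2.2.1 • v - MulOpposite.op x.2.2.2 • v

theorem act_sub (x : glHomRSp m) (v w : Fin m → ℍ[ℝ]) :
    act x (v - w) = act x v - act x w := by
  simp only [act, Matrix.mulVec_sub, smul_sub]
  abel

theorem glBr_eq (x y : glHomRSp m) :
    glBr x y = (⁅x.1, y.1⁆, act x y.2.1 - act y x.2.1, 0, ⁅x.2.2.2, y.2.2.2⁆) := by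
  have hop : ∀ (v : Fin m → ℍ[ℝ]) (a : ℍ[ℝ]), (fun i => v i * a) = MulOpposite.op a • v :=
    fun _ _ => rfl
  simp only [glBr, act, Ring.lie_def, hop]
  congr 2
  abel

theorem act_glBr (x y : glHomRSp m) (v : Fin m → ℍ[ℝ]) :
    act (glBr x y) v = act x (act y v) - act y (act x v) := by
  have hop : MulOpposite.op (x.2.2.2 * y.2.2.2 - y.2.2.2 * x.2.2.2) =
      MulOpposite.op y.2.2.2 * MulOpposite.op x.2.2.2
        - MulOpposite.op x.2.2.2 * MulOpposite.op y.2.2.2 := by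
    simp only [MulOpposite.op_sub, MulOpposite.op_mul]
  rw [glBr_eq]
  simp only [act, Ring.lie_def, hop, zero_smul, sub_zero, Matrix.sub_mulVec, sub_smul,
    Matrix.mulVec_sub, smul_sub, Matrix.mulVec_mulVec, Matrix.mulVec_smul, smul_smul]
  rw [smul_comm (MulOpposite.op x.2.2.2) y.2.2.1, smul_comm (MulOpposite.op y.2.2.2) x.2.2.1,
    mul_comm x.2.2.1]
  abel

section

attribute [local instance 100] LieRing.ofAssociativeRing

theorem glBr_skew (x y : glHomRSp m) : glBr x y = -glBr y x := by
  simp only [glBr_eq, Prod.neg_mk, lie_skew, neg_sub, neg_zero]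

theorem glBr_jacobi (x y z : glHomRSp m) :
    glBr x (glBr y z) + glBr y (glBr z x) + glBr z (glBr x y) = 0 := by
  simp only [glBr_eq, Prod.mk_add_mk, Prod.mk_eq_zero, lie_jacobi, add_zero, true_and, and_true]
  simp only [← glBr_eq, act_sub, act_glBr]
  abel

end

end glHomRSp

/-- The above bracket (with the `sp₁`-components constrained to be
imaginary) defines a Lie algebra structure: it is closed on imaginary `sp₁`-components,
antisymmetric, and satisfies the Jacobi identity. -/
theorem glHomRSp_bracket_is_lie_algebra (m : ℕ) :
    (∀ x y : glHomRSp m, x.2.2.2.re = 0 → y.2.2.2.re = 0 → (glBr x y).2.2.2.re = 0) ∧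
    (∀ x y : glHomRSp m, glBr x y = -glBr y x) ∧
    (∀ x y z : glHomRSp m, x.2.2.2.re = 0 → y.2.2.2.re = 0 → z.2.2.2.re = 0 →
      glBr x (glBr y z) + glBr y (glBr z x) + glBr z (glBr x y) = 0) := by
  refine ⟨fun x y _ _ => ?_, glHomRSp.glBr_skew, fun x y z _ _ _ => glHomRSp.glBr_jacobi x y z⟩
  rw [glHomRSp.glBr_eq]
  exact Quaternion.re_lie _ _
end

section
/- For each fixed admissible hypercomplex basis (I₁,I₂,I₃) of V = ℍⁿ, the map sending v* ∈ V* to the endomorphism v ↦ v*(v)·id + v ⊗ v* − Σ_α [v*(I_α v) I_α + I_α v ⊗ (v* ∘ I_α)] takes values in the Lie algebra gl_n(ℍ) ⊕ sp₁ ⊂ gl(V), i.e., each such endomorphism commutes with the quaternionic structure Q up to rotation of Q (it preserves the 3-plane Q under bracket). -/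
open scoped Quaternion

/-- Right multiplication by a fixed quaternion on `ℍⁿ`, as an ℝ-linear endomorphism. -/
noncomputable def Rmul (n : ℕ) (h : ℍ[ℝ]) : Module.End ℝ (Fin n → ℍ[ℝ]) :=
  LinearMap.pi fun m => (LinearMap.mulRight ℝ h).comp (LinearMap.proj m)

/-- The standard hypercomplex structure `I₁ = −R_i, I₂ = −R_j, I₃ = −R_k` of `ℍⁿ`. -/
noncomputable def Istd (n : ℕ) : Fin 3 → Module.End ℝ (Fin n → ℍ[ℝ])
  | 0 => -(Rmul n ⟨0, 1, 0, 0⟩)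
  | 1 => -(Rmul n ⟨0, 0, 1, 0⟩)
  | 2 => -(Rmul n ⟨0, 0, 0, 1⟩)

/-- The standard quaternionic structure `Q = span(I₁, I₂, I₃)` of `ℍⁿ`. -/
noncomputable def Qstd (n : ℕ) : Submodule ℝ (Module.End ℝ (Fin n → ℍ[ℝ])) :=
  Submodule.span ℝ (Set.range (Istd n))

/-!
Write the endomorphism as `A = v*(v)·1 + T - q` with `q = Σ_α v*(I_α v) I_α ∈ Q` and
`T = v ⊗ v* - Σ_α I_α v ⊗ (v* ∘ I_α)`. Composing `T` with some `I_β` on either side only permutes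
its four terms `±I_a v ⊗ (v* ∘ I_a)` (with `I_0 = 1`), so `T` commutes with `Q`, and the scalar
part is central. Hence `⁅A, J⁆ = ⁅J, q⁆`, which lies in `Q` since `Q ≅ sp₁` is closed under
brackets. Only the quaternion relations among `I₁, I₂, I₃` enter.
-/

/-- Indices live in `Fin 3`, so `mul_add_one` says `I₁I₂ = I₃`, `I₂I₃ = I₁` and `I₃I₁ = I₂`. -/
structure IsHypercomplex {R V : Type*} [CommRing R] [AddCommGroup V] [Module R V]
    (I : Fin 3 → Module.End R V) : Prop where
  mul_self : ∀ α, I α * I α = -1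
  mul_add_one : ∀ α, I α * I (α + 1) = I (α + 2)

namespace IsHypercomplex

variable {R V : Type*} [CommRing R] [AddCommGroup V] [Module R V] {I : Fin 3 → Module.End R V}

theorem add_one_mul (hI : IsHypercomplex I) (α : Fin 3) : I (α + 1) * I α = -I (α + 2) := by
  calc I (α + 1) * I α = I (α + 1) * (I (α + 1) * I (α + 1 + 1)) := by
        rw [hI.mul_add_one, show α + 1 + 2 = α by omega]
    _ = -I (α + 2) := by rw [← mul_assoc, hI.mul_self, show α + 1 + 1 = α + 2 by omega]; simp

theorem mul_add_two (hI : IsHypercomplex I) (α : Fin 3) : I α * I (α + 2) = -I (α + 1) := by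
  simpa [show α + 2 + 1 = α by omega, show α + 2 + 2 = α + 1 by omega] using
    hI.add_one_mul (α + 2)

theorem add_two_mul (hI : IsHypercomplex I) (α : Fin 3) : I (α + 2) * I α = I (α + 1) := by
  simpa [show α + 2 + 1 = α by omega, show α + 2 + 2 = α + 1 by omega] using
    hI.mul_add_one (α + 2)

theorem lie_mem_span_range (hI : IsHypercomplex I) (α β : Fin 3) :
    ⁅I α, I β⁆ ∈ Submodule.span R (Set.range I) := by
  have mem (γ : Fin 3) : I γ ∈ Submodule.span R (Set.range I) := Submodule.subset_span ⟨γ, rfl⟩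
  obtain ⟨k, rfl⟩ : ∃ k, β = α + k := ⟨β - α, by omega⟩
  fin_cases k
  · simp [Ring.lie_def]
  · simpa [Ring.lie_def, hI.mul_add_one, hI.add_one_mul] using
      add_mem (mem (α + 2)) (mem (α + 2))
  · simpa [Ring.lie_def, hI.mul_add_two, hI.add_two_mul] using
      sub_mem (neg_mem (mem (α + 1))) (mem (α + 1))

theorem lie_mem_span (hI : IsHypercomplex I) {J K : Module.End R V}
    (hJ : J ∈ Submodule.span R (Set.range I)) (hK : K ∈ Submodule.span R (Set.range I)) :
    ⁅J, K⁆ ∈ Submodule.span R (Set.range I) := by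
  induction hJ, hK using Submodule.span_induction₂ with
  | mem_mem _ _ hx hy =>
    obtain ⟨α, rfl⟩ := hx
    obtain ⟨β, rfl⟩ := hy
    exact hI.lie_mem_span_range α β
  | zero_left => simp [Ring.lie_def]
  | zero_right => simp [Ring.lie_def]
  | add_left _ _ _ _ _ _ hx hy =>
    rw [Ring.lie_def] at *; convert add_mem hx hy using 1; noncomm_ring
  | add_right _ _ _ _ _ _ hx hy =>
    rw [Ring.lie_def] at *; convert add_mem hx hy using 1; noncomm_ring
  | smul_left r _ _ _ _ h =>
    rw [Ring.lie_def] at *; convert Submodule.smul_mem _ r h using 1; simp [smul_sub]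
  | smul_right r _ _ _ _ h =>
    rw [Ring.lie_def] at *; convert Submodule.smul_mem _ r h using 1; simp [smul_sub]

end IsHypercomplex

section Prolongation

variable {R V : Type*} [CommRing R] [AddCommGroup V] [Module R V]

def prolongationEnd (I : Fin 3 → Module.End R V) (vstar : V →ₗ[R] R) (v : V) :
    Module.End R V :=
  vstar v • 1 + vstar.smulRight v
    - ∑ α, (vstar (I α v) • I α + (vstar ∘ₗ I α).smulRight (I α v))

def quaternionicRankOne (I : Fin 3 → Module.End R V) (vstar : V →ₗ[R] R) (v : V) :
    Module.End R V :=
  vstar.smulRight v - ∑ α, (vstar ∘ₗ I α).smulRight (I α v)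

theorem prolongationEnd_eq_quaternionicRankOne (I : Fin 3 → Module.End R V)
    (vstar : V →ₗ[R] R) (v : V) :
    prolongationEnd I vstar v
      = vstar v • 1 + quaternionicRankOne I vstar v - ∑ α, vstar (I α v) • I α := by
  rw [prolongationEnd, quaternionicRankOne, Finset.sum_add_distrib]
  abel

theorem IsHypercomplex.commute_quaternionicRankOne {I : Fin 3 → Module.End R V}
    (hI : IsHypercomplex I) (vstar : V →ₗ[R] R) (v : V) (β : Fin 3) :
    Commute (quaternionicRankOne I vstar v) (I β) := by
  have reindex : ∑ α, (vstar ∘ₗ I α).smulRight (I α v)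
      = ∑ k : Fin 3, (vstar ∘ₗ I (β + k)).smulRight (I (β + k) v) :=
    (Equiv.sum_comp (Equiv.addLeft β) fun α => (vstar ∘ₗ I α).smulRight (I α v)).symm
  ext w
  simp only [quaternionicRankOne, reindex, Fin.sum_univ_three, add_zero, Module.End.mul_apply,
    LinearMap.sub_apply, LinearMap.add_apply, LinearMap.smulRight_apply, LinearMap.comp_apply,
    map_sub, map_add, map_smul]
  simp only [← Module.End.mul_apply, hI.mul_self, hI.mul_add_one, hI.add_one_mul, hI.mul_add_two,
    hI.add_two_mul]
  simp only [LinearMap.neg_apply, Module.End.one_apply, map_neg]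
  module

theorem IsHypercomplex.lie_prolongationEnd_mem_span {I : Fin 3 → Module.End R V}
    (hI : IsHypercomplex I) (vstar : V →ₗ[R] R) (v : V) {J : Module.End R V}
    (hJ : J ∈ Submodule.span R (Set.range I)) :
    ⁅prolongationEnd I vstar v, J⁆ ∈ Submodule.span R (Set.range I) := by
  rw [prolongationEnd_eq_quaternionicRankOne]
  set T := quaternionicRankOne I vstar v
  set q := ∑ α, vstar (I α v) • I α
  have hq : q ∈ Submodule.span R (Set.range I) :=
    Submodule.sum_mem _ fun α _ => Submodule.smul_mem _ _ (Submodule.subset_span ⟨α, rfl⟩)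
  have hT : Commute T J := by
    suffices Submodule.span R (Set.range I) ≤ (Subalgebra.centralizer R {T}).toSubmodule from
      ((Subalgebra.mem_centralizer_iff R).mp (this hJ) T rfl)
    rw [Submodule.span_le]
    rintro _ ⟨β, rfl⟩
    exact (Subalgebra.mem_centralizer_iff R).mpr fun _ h =>
      h ▸ hI.commute_quaternionicRankOne vstar v β
  have bracket : ⁅vstar v • 1 + T - q, J⁆ = ⁅J, q⁆ := by
    rw [Ring.lie_def, Ring.lie_def, sub_mul, mul_sub, add_mul, mul_add, hT.eq, smul_mul_assoc,
      mul_smul_comm, one_mul, mul_one]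
    abel
  exact bracket ▸ hI.lie_mem_span hJ hq

end Prolongation

theorem Rmul_mul (n : ℕ) (a b : ℍ[ℝ]) : Rmul n a * Rmul n b = Rmul n (b * a) :=
  LinearMap.ext fun w => funext fun m => by simp [Rmul, mul_assoc]

theorem Rmul_neg (n : ℕ) (a : ℍ[ℝ]) : Rmul n (-a) = -Rmul n a :=
  LinearMap.ext fun w => funext fun m => by simp [Rmul]

theorem Rmul_one (n : ℕ) : Rmul n 1 = 1 :=
  LinearMap.ext fun w => funext fun m => by simp [Rmul]

def imUnit : Fin 3 → ℍ[ℝ] := ![⟨0, 1, 0, 0⟩, ⟨0, 0, 1, 0⟩, ⟨0, 0, 0, 1⟩]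

theorem Istd_eq_neg_Rmul (n : ℕ) (α : Fin 3) : Istd n α = -Rmul n (imUnit α) := by
  fin_cases α <;> rfl

-- The `Quaternion.*_mul` lemmas must fire before `imUnit` unfolds: the literals have type
-- `ℍ[ℝ,-1,0,-1]` rather than `ℍ[ℝ]`, and simp does not unify the two.
theorem imUnit_mul_self (α : Fin 3) : imUnit α * imUnit α = -1 := by
  fin_cases α <;> ext <;> simp only [Quaternion.re_mul, Quaternion.imI_mul, Quaternion.imJ_mul,
    Quaternion.imK_mul] <;> simp [imUnit]

theorem imUnit_add_one_mul (α : Fin 3) : imUnit (α + 1) * imUnit α = -imUnit (α + 2) := by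
  fin_cases α <;> ext <;> simp only [Quaternion.re_mul, Quaternion.imI_mul, Quaternion.imJ_mul,
    Quaternion.imK_mul, Quaternion.re_neg, Quaternion.imI_neg, Quaternion.imJ_neg,
    Quaternion.imK_neg] <;> simp [imUnit]

theorem isHypercomplex_Istd (n : ℕ) : IsHypercomplex (Istd n) where
  mul_self α := by
    rw [Istd_eq_neg_Rmul, neg_mul_neg (Rmul n _), Rmul_mul, imUnit_mul_self, Rmul_neg, Rmul_one]
  mul_add_one α := by
    rw [Istd_eq_neg_Rmul, Istd_eq_neg_Rmul, Istd_eq_neg_Rmul, neg_mul_neg (Rmul n _), Rmul_mul,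
      imUnit_add_one_mul, Rmul_neg]

/-- For each `v* ∈ V*` and `v ∈ V`, the endomorphism
`w ↦ v*(v) w + v*(w) v − Σ_α (v*(I_α v) I_α w + v*(I_α w) I_α v)` lies in
`gl_n(ℍ) ⊕ sp₁`, the normalizer of `Q` in `gl(V)`: its bracket with any `J ∈ Q`
stays in `Q`. -/
theorem prolongation_formula_normalizes_Q
    (n : ℕ) (vstar : (Fin n → ℍ[ℝ]) →ₗ[ℝ] ℝ) (v : Fin n → ℍ[ℝ]) :
    ∀ J ∈ Qstd n,
      ⁅(vstar v • (1 : Module.End ℝ (Fin n → ℍ[ℝ])) + vstar.smulRight v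
          - ∑ α : Fin 3,
            (vstar (Istd n α v) • Istd n α
              + (vstar ∘ₗ Istd n α).smulRight (Istd n α v))), J⁆ ∈ Qstd n :=
  fun _ hJ => (isHypercomplex_Istd n).lie_prolongationEnd_mem_span vstar v hJ
end

section
/- In the setup of the generalized Spencer complex C^{p,q}(g,W) with W ⊂ V of codimension one spanned complement ⟨ρ⟩, let C^{p,q}_⊥(g) ⊂ g^{p−1}⊗Λ^qV* be the subspace of cochains vanishing on Λ^qW. Then the map φ(c) := (−1)^q (ι_ρ c)|_{Λ^{q−1}W} is a linear isomorphism from C^{p,q}_⊥(g) onto C^{p,q−1}(g,W) commuting with the Spencer differentials. -/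
/-!
Write `V = W ⊕ ℝρ`. A cochain `c` vanishing on `W` is determined by `(ι_ρ c)|_W`: expanding the
first argument as `x = w + tρ` shows that every `ι_x c` again vanishes on `W` and has
`(ι_ρ ι_x c)|_W = -(ι_x ι_ρ c)|_W = 0`, so induction on the degree applies. Conversely, a form `b`
on `W` is `(ι_ρ c)|_W` for `c = φ ∧ (b ∘ π)`, where `π : V → W` is the projection and `φ` is the
functional with `φ ρ = 1` and `φ|_W = 0`. The chain-map identity comes from splitting the Spencer
sum at the slot holding `ρ`: the term omitting `ρ` is a value of `c` on `W`, hence zero.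
-/

/-- The (generalized) Spencer operator on plain cochains. -/
noncomputable def spencerD {L : Type*} [LieRing L] [LieAlgebra ℝ L]
    {W : Type*} [AddCommGroup W] [Module ℝ W] (ιL : W →ₗ[ℝ] L)
    (q : ℕ) (c : (Fin q → W) → L) : (Fin (q + 1) → W) → L := fun w =>
  ∑ i : Fin (q + 1), ((-1 : ℝ) ^ (i : ℕ)) • ⁅c (fun l => w (i.succAbove l)), ιL (w i)⁆

theorem Submodule.exists_dual_apply_eq_one_le_ker_of_notMem {K V : Type*} [Field K]
    [AddCommGroup V] [Module K V] {W : Submodule K V} {x : V} (hx : x ∉ W) :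
    ∃ φ : Module.Dual K V, φ x = 1 ∧ W ≤ LinearMap.ker φ := by
  obtain ⟨φ, hφx, hφW⟩ := W.exists_dual_map_eq_bot_of_notMem hx inferInstance
  refine ⟨(φ x)⁻¹ • φ, by simp [hφx], fun w hw => ?_⟩
  have hφw : φ w = 0 := LinearMap.le_ker_iff_map.2 hφW hw
  simp [hφw]

namespace AlternatingMap

section CommRing

variable {R M N : Type*} [CommRing R] [AddCommGroup M] [Module R M] [AddCommGroup N] [Module R N]

theorem curryLeft_curryLeft_swap {n : ℕ} (f : M [⋀^Fin (n + 2)]→ₗ[R] N) (x y : M) :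
    (f.curryLeft x).curryLeft y = -(f.curryLeft y).curryLeft x := by
  ext v
  rw [neg_apply, curryLeft_apply_apply, curryLeft_apply_apply, curryLeft_apply_apply,
    curryLeft_apply_apply, ← f.map_swap _ (Fin.zero_ne_one (n := n))]
  congr 1
  ext i
  refine Fin.cases ?_ (fun i => Fin.cases ?_ (fun i => ?_) i) i
  · simp
  · simp
  · rw [Function.comp_apply,
      Equiv.swap_apply_of_ne_of_ne (Fin.succ_ne_zero _) (Fin.succ_succ_ne_one _)]
    rfl

theorem eq_zero_of_forall_curryLeft_eq_zero {n : ℕ} {f : M [⋀^Fin (n + 1)]→ₗ[R] N}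
    (h : ∀ x, f.curryLeft x = 0) : f = 0 := by
  ext v
  rw [← Fin.cons_self_tail v]
  exact congr($(h (v 0)) (Fin.tail v))

variable {W : Submodule R M} {ρ : M}

theorem compLinearMap_curryLeft_eq_zero (hW : Codisjoint W (R ∙ ρ)) {n : ℕ}
    {f : M [⋀^Fin (n + 1)]→ₗ[R] N} (hfW : f.compLinearMap W.subtype = 0)
    (hfρ : (f.curryLeft ρ).compLinearMap W.subtype = 0) (x : M) :
    (f.curryLeft x).compLinearMap W.subtype = 0 := by
  obtain ⟨w, hw, _, ht, rfl⟩ := Submodule.mem_sup.1 (hW.eq_top ▸ Submodule.mem_top (x := x))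
  obtain ⟨t, rfl⟩ := Submodule.mem_span_singleton.1 ht
  ext v
  have hfw : f (Matrix.vecCons w fun i => (v i : M)) = 0 := by
    have h := congr($hfW (Fin.cons ⟨w, hw⟩ v))
    exact (congrArg f (funext fun i => Fin.cases rfl (fun _ => rfl) i)).trans h
  simpa [hfw] using congr(t • $hfρ v)

theorem eq_zero_of_compLinearMap_eq_zero (hW : Codisjoint W (R ∙ ρ)) {n : ℕ}
    (f : M [⋀^Fin (n + 1)]→ₗ[R] N) (hfW : f.compLinearMap W.subtype = 0)
    (hfρ : (f.curryLeft ρ).compLinearMap W.subtype = 0) : f = 0 := by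
  induction n with
  | zero =>
    refine eq_zero_of_forall_curryLeft_eq_zero fun x => ?_
    ext u
    rw [Subsingleton.elim u (W.subtype ∘ Fin.elim0)]
    exact congr($(compLinearMap_curryLeft_eq_zero hW hfW hfρ x) Fin.elim0)
  | succ n ih =>
    refine eq_zero_of_forall_curryLeft_eq_zero fun x =>
      ih _ (compLinearMap_curryLeft_eq_zero hW hfW hfρ x) ?_
    have hρx := compLinearMap_curryLeft_eq_zero hW hfρ (by simp) x
    ext v
    simpa [curryLeft_curryLeft_swap f x ρ] using congr($hρx v)

theorem exists_compLinearMap_eq_zero_and_curryLeft_eq {φ : Module.Dual R M} (hφρ : φ ρ = 1)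
    (hφW : W ≤ LinearMap.ker φ) {π : M →ₗ[R] W} (hπ : π ∘ₗ W.subtype = LinearMap.id) {n : ℕ}
    (b : W [⋀^Fin n]→ₗ[R] N) :
    ∃ c : M [⋀^Fin (n + 1)]→ₗ[R] N,
      c.compLinearMap W.subtype = 0 ∧ (c.curryLeft ρ).compLinearMap W.subtype = b := by
  have hφW' (w : W) : φ w = 0 := hφW w.2
  have hπ' (w : W) : π w = w := LinearMap.congr_fun hπ w
  refine ⟨alternatizeUncurryFin (φ.smulRight (b.compLinearMap π)), ?_, ?_⟩
  · ext w
    simp [alternatizeUncurryFin_apply, hφW']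
  · ext w
    simp [alternatizeUncurryFin_apply, Fin.sum_univ_succ, hφW', hφρ, hπ']

end CommRing

theorem exists_compLinearMap_eq_zero_and_curryLeft_eq_of_isCompl {K M N : Type*} [Field K]
    [AddCommGroup M] [Module K M] [AddCommGroup N] [Module K N] {W : Submodule K M} {ρ : M}
    (hρ : ρ ≠ 0) (hW : IsCompl W (K ∙ ρ)) {n : ℕ} (b : W [⋀^Fin n]→ₗ[K] N) :
    ∃ c : M [⋀^Fin (n + 1)]→ₗ[K] N,
      c.compLinearMap W.subtype = 0 ∧ (c.curryLeft ρ).compLinearMap W.subtype = b := by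
  have hρW : ρ ∉ W := fun h =>
    hρ (Submodule.disjoint_def.1 hW.disjoint ρ h (Submodule.mem_span_singleton_self ρ))
  obtain ⟨φ, hφρ, hφW⟩ := Submodule.exists_dual_apply_eq_one_le_ker_of_notMem hρW
  exact exists_compLinearMap_eq_zero_and_curryLeft_eq hφρ hφW
    (Submodule.projectionOnto_comp_subtype hW) b

end AlternatingMap

section Spencer

variable {L : Type*} [LieRing L] [LieAlgebra ℝ L] {V : Type*} [AddCommGroup V] [Module ℝ V]

theorem spencerD_smul (ιL : V →ₗ[ℝ] L) (q : ℕ) (a : ℝ) (c : (Fin q → V) → L) :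
    spencerD ιL q (fun w => a • c w) = a • spencerD ιL q c := by
  funext w
  simp [spencerD, Finset.smul_sum, smul_comm a]

theorem spencerD_cons (ιL : V →ₗ[ℝ] L) (q : ℕ) (c : (Fin (q + 1) → V) → L) (ρ : V)
    (w : Fin (q + 1) → V) :
    spencerD ιL (q + 1) c (Fin.cons ρ w) =
      ⁅c w, ιL ρ⁆ - spencerD ιL q (fun u => c (Fin.cons ρ u)) w := by
  have hcomp (i : Fin (q + 1)) :
      (fun l => (Fin.cons ρ w : Fin (q + 2) → V) (i.succ.succAbove l)) =
        Fin.cons ρ fun l => w (i.succAbove l) :=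
    Fin.cons_comp_succ_succAbove ρ w i
  simp [spencerD, Fin.sum_univ_succ (n := q + 1), pow_succ, hcomp, sub_eq_add_neg]

end Spencer

theorem contraction_with_rho_iso_and_chain_map_general
    {L : Type*} [LieRing L] [LieAlgebra ℝ L]
    {V : Type*} [AddCommGroup V] [Module ℝ V] (j : V →ₗ[ℝ] L)
    (W : Submodule ℝ V) (ρ : V) (hρ : ρ ≠ 0)
    (hcompl : IsCompl W (Submodule.span ℝ {ρ})) (q : ℕ) :
    Function.Bijective
      (fun c : {c : AlternatingMap ℝ V L (Fin (q + 1)) //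
          ∀ w : Fin (q + 1) → W, c (fun i => (w i : V)) = 0} =>
        ((-1 : ℝ) ^ (q + 1)) • ((c.1.curryLeft ρ).compLinearMap W.subtype)) ∧
    ∀ c : {c : AlternatingMap ℝ V L (Fin (q + 1)) //
        ∀ w : Fin (q + 1) → W, c (fun i => (w i : V)) = 0},
      (fun w : Fin (q + 1) → W =>
          ((-1 : ℝ) ^ (q + 2)) •
            spencerD j (q + 1) (⇑c.1) (Fin.cons ρ (fun i => (w i : V))))
        = spencerD (j ∘ₗ W.subtype) q
            (fun w : Fin q → W =>
              ((-1 : ℝ) ^ (q + 1)) • c.1 (Fin.cons ρ (fun i => (w i : V)))) := by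
  refine ⟨⟨fun c c' h => ?_, fun b => ?_⟩, fun c => ?_⟩
  · have hcurry := ((isUnit_neg_one.pow (q + 1)).smul_left_cancel).1 h
    refine Subtype.ext (sub_eq_zero.1 ?_)
    refine AlternatingMap.eq_zero_of_compLinearMap_eq_zero hcompl.codisjoint _ ?_ ?_
    · ext w
      simp [c.2 w, c'.2 w]
    · ext w
      simpa [sub_eq_zero] using congr($hcurry w)
  · obtain ⟨c, hcW, hcρ⟩ := AlternatingMap.exists_compLinearMap_eq_zero_and_curryLeft_eq_of_isCompl
      hρ hcompl (((-1 : ℝ) ^ (q + 1)) • b)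
    refine ⟨⟨c, fun w => by simpa using congr($hcW w)⟩, ?_⟩
    change (-1 : ℝ) ^ (q + 1) • (c.curryLeft ρ).compLinearMap W.subtype = b
    rw [hcρ, smul_smul, ← mul_pow, neg_one_mul, neg_neg, one_pow, one_smul]
  · funext w
    have h := spencerD_cons j q c.1 ρ (fun i => (w i : V))
    rw [c.2 w, zero_lie, zero_sub] at h
    rw [h, spencerD_smul, Pi.smul_apply, pow_succ, mul_neg_one, neg_smul_neg]
    -- `spencerD` commutes definitionally with restricting cochains along `W.subtype`
    rfl

/-- Let `W ⊂ V` have codimension one, with complement spanned by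
`ρ ≠ 0`, and let `C^{p,q}_⊥(g) ⊂ g^{p−1} ⊗ ΛᵠV*` be the alternating cochains vanishing
on `ΛᵠW`.  Then `φ(c) := (−1)ᵠ (ι_ρ c)|_{Λ^{q−1}W}` is a linear bijection from
`C^{p,q}_⊥(g)` onto `C^{p,q−1}(g, W)` commuting with the Spencer differentials. -/
theorem contraction_with_rho_iso_and_chain_map
    {L : Type*} [LieRing L] [LieAlgebra ℝ L]
    {V : Type*} [AddCommGroup V] [Module ℝ V] (j : V →ₗ[ℝ] L)
    (habel : ∀ x y : V, ⁅j x, j y⁆ = 0)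
    (W : Submodule ℝ V) (ρ : V) (hρ : ρ ≠ 0)
    (hcompl : IsCompl W (Submodule.span ℝ {ρ})) (q : ℕ) :
    Function.Bijective
      (fun c : {c : AlternatingMap ℝ V L (Fin (q + 1)) //
          ∀ w : Fin (q + 1) → W, c (fun i => (w i : V)) = 0} =>
        ((-1 : ℝ) ^ (q + 1)) • ((c.1.curryLeft ρ).compLinearMap W.subtype)) ∧
    ∀ c : {c : AlternatingMap ℝ V L (Fin (q + 1)) //
        ∀ w : Fin (q + 1) → W, c (fun i => (w i : V)) = 0},
      (fun w : Fin (q + 1) → W =>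
          ((-1 : ℝ) ^ (q + 2)) •
            spencerD j (q + 1) (⇑c.1) (Fin.cons ρ (fun i => (w i : V))))
        = spencerD (j ∘ₗ W.subtype) q
            (fun w : Fin q → W =>
              ((-1 : ℝ) ^ (q + 1)) • c.1 (Fin.cons ρ (fun i => (w i : V)))) :=
  contraction_with_rho_iso_and_chain_map_general j W ρ hρ hcompl q
end
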